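/- For a parametrized BWR-game G(x) (with a distinguished deterministic position w carrying a self-loop of reward x, reachable with positive probability from every random position), the set I(G(x)) = { x ∈ [−R, R] : G(x) is ergodic } is a (possibly empty) closed subinterval of [−R, R]. -/

import Mathlib

/-!
Fix a pair of strategies; validity forces it to stay at `w`. Changing the parameter from `x` to
`y ≥ x` raises the expected reward vector by `y - x` at `w` only, and Cesàro means of a stochastic
chain are monotone and commute with adding constants, so the mean payoff is monotone and
1-Lipschitz in the parameter. Since `w` is absorbing with payoff `x`, `G(x)` is ergodic iff White
can secure `x` and Black can secure `x`. A White strategy securing `z` in `G(z)` secures every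
`y ≤ z` in `G(y)`, and dually for Black, so the ergodic parameters form the intersection of a lower
and an upper set of reals, both closed because there are finitely many strategies and every payoff
is continuous in the parameter. A closed, bounded, order-connected set of reals is an interval.
-/

open Matrix Filter

/-- A BWR-game: finite digraph with no sinks, positions partitioned into
White (`player v = 0`), Black (`player v = 1`) and Random (`player v = 2`),
positive transition probabilities on arcs out of random positions summing to 1,
and local rewards on arcs. -/
structure BWR (V : Type) [Fintype V] [DecidableEq V] where
  succ : V → Finset V
  succ_nonempty : ∀ v, (succ v).Nonempty
  player : V → Fin 3
  p : V → V → ℝ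
  p_mem : ∀ v u, player v = 2 → (u ∈ succ v ↔ 0 < p v u)
  p_zero : ∀ v u, player v = 2 → u ∉ succ v → p v u = 0
  p_sum : ∀ v, player v = 2 → ∑ u ∈ succ v, p v u = 1
  r : V → V → ℝ

namespace BWR

variable {V : Type} [Fintype V] [DecidableEq V] (G : BWR V)

/-- A (pure stationary) situation is valid if it moves along arcs. -/
def Valid (s : V → V) : Prop := ∀ v, s v ∈ G.succ v

/-- Combine a White strategy and a Black strategy into one situation. -/
def combine (sW sB : V → V) : V → V := fun v => if G.player v = 0 then sW v else sB v

/-- Transition matrix of the Markov chain obtained by fixing situation `s`. -/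
noncomputable def P (s : V → V) : Matrix V V ℝ :=
  Matrix.of fun v u => if G.player v = 2 then G.p v u else if s v = u then 1 else 0

/-- Expected one-step reward under situation `s`. -/
noncomputable def rbar (s : V → V) : V → ℝ :=
  fun v => if G.player v = 2 then ∑ u ∈ G.succ v, G.p v u * G.r v u else G.r v (s v)

/-- Limiting mean payoff from initial position `v` under situation `s`. -/
noncomputable def payoff (s : V → V) (v : V) : ℝ :=
  Filter.liminf
    (fun T : ℕ => (∑ t ∈ Finset.range (T + 1), (G.P s ^ t).mulVec (G.rbar s)) v / (T + 1))
    Filter.atTop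

/-- `μ` is the value function of the game: some saddle point in pure stationary
strategies realizes it uniformly. -/
def IsValue (μ : V → ℝ) : Prop :=
  ∃ sW sB : V → V, G.Valid (G.combine sW sB) ∧
    (∀ v, μ v = G.payoff (G.combine sW sB) v) ∧
    (∀ sW' : V → V, G.Valid (G.combine sW' sB) → ∀ v, G.payoff (G.combine sW' sB) v ≤ μ v) ∧
    (∀ sB' : V → V, G.Valid (G.combine sW sB') → ∀ v, μ v ≤ G.payoff (G.combine sW sB') v)

/-- The local value `M̄[r](v)`. -/
noncomputable def mbar : V → ℝ := fun v =>
  if G.player v = 0 then (G.succ v).sup' (G.succ_nonempty v) (fun u => G.r v u)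
  else if G.player v = 1 then (G.succ v).inf' (G.succ_nonempty v) (fun u => G.r v u)
  else ∑ u ∈ G.succ v, G.p v u * G.r v u

/-- A locally optimal situation achieves the local value at every controlled position. -/
def LocallyOptimal (s : V → V) : Prop :=
  G.Valid s ∧ ∀ v, G.player v ≠ 2 → G.r v (s v) = G.mbar v

end BWR

/-- A BWR-game is ergodic if its value function is constant. -/
def BWR.Ergodic {V : Type} [Fintype V] [DecidableEq V] (G : BWR V) : Prop :=
  ∃ μ : V → ℝ, G.IsValue μ ∧ ∀ v u : V, μ v = μ u

theorem Set.OrdConnected.exists_eq_Icc_of_isClosed {α : Type*} [ConditionallyCompleteLinearOrder α]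
    [TopologicalSpace α] [OrderTopology α] [Nontrivial α] {S : Set α} (hS : S.OrdConnected)
    (hclosed : IsClosed S) (hbelow : BddBelow S) (habove : BddAbove S) :
    ∃ a b, S = Set.Icc a b := by
  rcases S.eq_empty_or_nonempty with rfl | hne
  · obtain ⟨a, b, hab⟩ := exists_pair_lt α
    exact ⟨b, a, (Set.Icc_eq_empty hab.not_ge).symm⟩
  · refine ⟨sInf S, sSup S,
      subset_antisymm (fun x hx => ⟨csInf_le hbelow hx, le_csSup habove hx⟩) ?_⟩
    exact hS.out (hclosed.csInf_mem hne hbelow) (hclosed.csSup_mem hne habove)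

namespace Matrix

variable {n : Type*} [Fintype n] [DecidableEq n] {M : Matrix n n ℝ} {f g : n → ℝ}

theorem mulVec_mono_of_mem_rowStochastic (hM : M ∈ rowStochastic ℝ n) (hfg : f ≤ g) :
    M *ᵥ f ≤ M *ᵥ g := by
  intro v
  have h := nonneg_mulVec_of_mem_rowStochastic hM (x := g - f) (fun u => sub_nonneg.2 (hfg u)) v
  rwa [mulVec_sub, Pi.sub_apply, sub_nonneg] at h

theorem mulVec_const_of_mem_rowStochastic (hM : M ∈ rowStochastic ℝ n) (c : ℝ) :
    M *ᵥ (fun _ => c) = fun _ => c := by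
  have h : (fun _ => c : n → ℝ) = c • 1 := by ext; simp
  rw [h, mulVec_smul, one_vecMul_of_mem_rowStochastic hM]

noncomputable def cesaroMean (M : Matrix n n ℝ) (f : n → ℝ) (v : n) (T : ℕ) : ℝ :=
  (∑ t ∈ Finset.range (T + 1), (M ^ t) *ᵥ f) v / (T + 1)

noncomputable def meanPayoff (M : Matrix n n ℝ) (f : n → ℝ) (v : n) : ℝ :=
  liminf (cesaroMean M f v) atTop

theorem cesaroMean_mono (hM : M ∈ rowStochastic ℝ n) (hfg : f ≤ g) (v : n) (T : ℕ) :
    cesaroMean M f v T ≤ cesaroMean M g v T := by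
  unfold cesaroMean
  gcongr
  simp only [Finset.sum_apply]
  exact Finset.sum_le_sum fun t _ => mulVec_mono_of_mem_rowStochastic (pow_mem hM t) hfg v

theorem cesaroMean_const (hM : M ∈ rowStochastic ℝ n) (c : ℝ) (v : n) (T : ℕ) :
    cesaroMean M (fun _ => c) v T = c := by
  simp only [cesaroMean, Finset.sum_apply, mulVec_const_of_mem_rowStochastic (pow_mem hM _),
    Finset.sum_const, Finset.card_range, nsmul_eq_mul]
  field_simp
  push_cast
  ring

theorem cesaroMean_add (M : Matrix n n ℝ) (f g : n → ℝ) (v : n) (T : ℕ) :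
    cesaroMean M (f + g) v T = cesaroMean M f v T + cesaroMean M g v T := by
  simp only [cesaroMean, mulVec_add, Finset.sum_add_distrib, Pi.add_apply, add_div]

theorem cesaroMean_add_const (hM : M ∈ rowStochastic ℝ n) (c : ℝ) (v : n) (T : ℕ) :
    cesaroMean M (fun u => f u + c) v T = cesaroMean M f v T + c :=
  (cesaroMean_add M f (fun _ => c) v T).trans (by rw [cesaroMean_const hM])

theorem cesaroMean_le (hM : M ∈ rowStochastic ℝ n) {c : ℝ} (hf : ∀ u, f u ≤ c) (v : n) (T : ℕ) :
    cesaroMean M f v T ≤ c :=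
  (cesaroMean_mono hM hf v T).trans_eq (cesaroMean_const hM c v T)

theorem le_cesaroMean (hM : M ∈ rowStochastic ℝ n) {c : ℝ} (hf : ∀ u, c ≤ f u) (v : n) (T : ℕ) :
    c ≤ cesaroMean M f v T :=
  (cesaroMean_const hM c v T).symm.trans_le (cesaroMean_mono hM hf v T)

theorem isBoundedUnder_le_cesaroMean (hM : M ∈ rowStochastic ℝ n) (f : n → ℝ) (v : n) :
    IsBoundedUnder (· ≤ ·) atTop (cesaroMean M f v) := by
  obtain ⟨K, hK⟩ := (Set.finite_range f).bddAbove
  exact isBoundedUnder_of ⟨K, cesaroMean_le hM (fun u => hK ⟨u, rfl⟩) v⟩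

theorem isBoundedUnder_ge_cesaroMean (hM : M ∈ rowStochastic ℝ n) (f : n → ℝ) (v : n) :
    IsBoundedUnder (· ≥ ·) atTop (cesaroMean M f v) := by
  obtain ⟨K, hK⟩ := (Set.finite_range f).bddBelow
  exact isBoundedUnder_of ⟨K, le_cesaroMean hM (fun u => hK ⟨u, rfl⟩) v⟩

theorem meanPayoff_mono (hM : M ∈ rowStochastic ℝ n) (hfg : f ≤ g) (v : n) :
    meanPayoff M f v ≤ meanPayoff M g v :=
  liminf_le_liminf (Eventually.of_forall (cesaroMean_mono hM hfg v))
    (isBoundedUnder_ge_cesaroMean hM f v) (isBoundedUnder_le_cesaroMean hM g v).isCoboundedUnder_ge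

theorem meanPayoff_add_const (hM : M ∈ rowStochastic ℝ n) (c : ℝ) (v : n) :
    meanPayoff M (fun u => f u + c) v = meanPayoff M f v + c := by
  rw [meanPayoff, meanPayoff, funext (cesaroMean_add_const hM c v)]
  exact liminf_add_const atTop _ c (isBoundedUnder_le_cesaroMean hM f v).isCoboundedUnder_ge
    (isBoundedUnder_ge_cesaroMean hM f v)

theorem meanPayoff_le_add (hM : M ∈ rowStochastic ℝ n) {c : ℝ} (hgf : ∀ u, g u ≤ f u + c)
    (v : n) : meanPayoff M g v ≤ meanPayoff M f v + c :=
  (meanPayoff_mono hM hgf v).trans_eq (meanPayoff_add_const hM c v)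

theorem meanPayoff_of_row_eq_single {w : n} (hw : M w = Pi.single w 1) (f : n → ℝ) :
    meanPayoff M f w = f w := by
  have hpow : ∀ t, (M ^ t *ᵥ f) w = f w := by
    intro t
    induction t with
    | zero => simp
    | succ t ih => rw [pow_succ', ← mulVec_mulVec, mulVec, hw, single_one_dotProduct, ih]
  have hmean : cesaroMean M f w = fun _ => f w := by
    ext T
    simp only [cesaroMean, Finset.sum_apply, hpow, Finset.sum_const, Finset.card_range,
      nsmul_eq_mul]
    field_simp
    push_cast
    ring
  rw [meanPayoff, hmean, liminf_const]

end Matrix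

namespace BWR

variable {V : Type} [Fintype V] [DecidableEq V]

section

variable (G : BWR V)

theorem P_row_of_player_ne_two (s : V → V) {v : V} (hv : G.player v ≠ 2) :
    G.P s v = Pi.single (s v) 1 := by
  ext u
  rw [P, of_apply, if_neg hv, Pi.single_apply]
  simp only [eq_comm]

theorem P_mem_rowStochastic (s : V → V) : G.P s ∈ rowStochastic ℝ V := by
  refine mem_rowStochastic_iff_sum.2 ⟨fun v u => ?_, fun v => ?_⟩ <;>
    by_cases hv : G.player v = 2
  · by_cases hu : u ∈ G.succ v
    · simpa [P, hv] using ((G.p_mem v u hv).1 hu).le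
    · simp [P, hv, G.p_zero v u hv hu]
  · rw [G.P_row_of_player_ne_two s hv, Pi.single_apply]
    positivity
  · rw [← G.p_sum v hv, Finset.sum_subset (Finset.subset_univ _)
      (fun u _ hu => G.p_zero v u hv hu)]
    simp [P, hv]
  · simp [G.P_row_of_player_ne_two s hv]

theorem payoff_eq_meanPayoff (s : V → V) (v : V) :
    G.payoff s v = meanPayoff (G.P s) (G.rbar s) v :=
  rfl

/-- The clause `∃ sB, G.Valid (G.combine sW sB)` says that `sW` moves along arcs at White's
positions. -/
def WhiteSecures (x : ℝ) : Prop :=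
  ∃ sW : V → V, (∃ sB, G.Valid (G.combine sW sB)) ∧
    ∀ sB, G.Valid (G.combine sW sB) → ∀ v, x ≤ G.payoff (G.combine sW sB) v

def BlackSecures (x : ℝ) : Prop :=
  ∃ sB : V → V, (∃ sW, G.Valid (G.combine sW sB)) ∧
    ∀ sW, G.Valid (G.combine sW sB) → ∀ v, G.payoff (G.combine sW sB) v ≤ x

theorem valid_combine {sW sB sW' sB' : V → V} (hW : G.Valid (G.combine sW sB'))
    (hB : G.Valid (G.combine sW' sB)) : G.Valid (G.combine sW sB) := by
  intro v
  by_cases hv : G.player v = 0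
  · simpa [combine, hv] using hW v
  · simpa [combine, hv] using hB v

theorem isValue_const_iff (x : ℝ) :
    G.IsValue (fun _ => x) ↔ G.WhiteSecures x ∧ G.BlackSecures x := by
  constructor
  · rintro ⟨sW, sB, hvalid, -, hW, hB⟩
    exact ⟨⟨sW, ⟨sB, hvalid⟩, hB⟩, ⟨sB, ⟨sW, hvalid⟩, hW⟩⟩
  · rintro ⟨⟨sW, ⟨sB', hW⟩, hsW⟩, ⟨sB, ⟨sW', hB⟩, hsB⟩⟩
    have hvalid := G.valid_combine hW hB
    exact ⟨sW, sB, hvalid, fun v => le_antisymm (hsW sB hvalid v) (hsB sW hvalid v), hsB, hsW⟩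

end

structure Parametrized (G : ℝ → BWR V) (w : V) : Prop where
  succ_eq : ∀ x y, (G x).succ = (G y).succ
  player_eq : ∀ x y, (G x).player = (G y).player
  p_eq : ∀ x y, (G x).p = (G y).p
  player_w_ne_two : ∀ x, (G x).player w ≠ 2
  succ_w : ∀ x, (G x).succ w = {w}
  r_w : ∀ x, (G x).r w w = x
  r_eq : ∀ x y v u, ¬(v = w ∧ u = w) → (G x).r v u = (G y).r v u

namespace Parametrized

variable {G : ℝ → BWR V} {w : V} (hG : Parametrized G w)
include hG

theorem P_eq (x y : ℝ) : (G x).P = (G y).P := by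
  ext s v u
  simp only [P, of_apply, hG.player_eq x y, hG.p_eq x y]

theorem valid_iff (x y : ℝ) {s : V → V} : (G x).Valid s ↔ (G y).Valid s := by
  simp only [Valid, hG.succ_eq x y]

theorem combine_eq (x y : ℝ) : (G x).combine = (G y).combine := by
  ext sW sB v
  simp only [combine, hG.player_eq x y]

theorem apply_w_of_valid {x : ℝ} {s : V → V} (hs : (G x).Valid s) : s w = w := by
  simpa [hG.succ_w x] using hs w

theorem rbar_w {x : ℝ} {s : V → V} (hs : s w = w) : (G x).rbar s w = x := by
  simp only [rbar, if_neg (hG.player_w_ne_two x), hs, hG.r_w]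

theorem rbar_of_ne (x y : ℝ) (s : V → V) {v : V} (hv : v ≠ w) :
    (G x).rbar s v = (G y).rbar s v := by
  have hr : ∀ u, (G x).r v u = (G y).r v u := fun u => hG.r_eq x y v u (fun h => hv h.1)
  simp only [rbar, hG.player_eq x y, hG.succ_eq x y, hG.p_eq x y, hr]

theorem payoff_w (x : ℝ) {s : V → V} (hs : s w = w) : (G x).payoff s w = x := by
  have hrow : (G x).P s w = Pi.single w 1 := by
    rw [P_row_of_player_ne_two _ _ (hG.player_w_ne_two x), hs]
  rw [payoff_eq_meanPayoff, meanPayoff_of_row_eq_single hrow, hG.rbar_w hs]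

theorem payoff_mono {x y : ℝ} (hxy : x ≤ y) {s : V → V} (hs : s w = w) (v : V) :
    (G x).payoff s v ≤ (G y).payoff s v := by
  rw [payoff_eq_meanPayoff, payoff_eq_meanPayoff, hG.P_eq x y]
  refine meanPayoff_mono ((G y).P_mem_rowStochastic s) (fun u => ?_) v
  rcases eq_or_ne u w with rfl | hu
  · rw [hG.rbar_w hs, hG.rbar_w hs]; exact hxy
  · rw [hG.rbar_of_ne x y s hu]

theorem payoff_le_payoff_add {x y : ℝ} (hxy : x ≤ y) {s : V → V} (hs : s w = w) (v : V) :
    (G y).payoff s v ≤ (G x).payoff s v + (y - x) := by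
  rw [payoff_eq_meanPayoff, payoff_eq_meanPayoff, hG.P_eq x y]
  refine meanPayoff_le_add ((G y).P_mem_rowStochastic s) (fun u => ?_) v
  rcases eq_or_ne u w with rfl | hu
  · rw [hG.rbar_w hs, hG.rbar_w hs]; linarith
  · rw [hG.rbar_of_ne x y s hu]; linarith

theorem continuous_payoff {s : V → V} (hs : s w = w) (v : V) :
    Continuous fun x => (G x).payoff s v := by
  refine (LipschitzWith.of_le_add fun x y => ?_).continuous
  rcases le_total x y with hxy | hyx
  · linarith [hG.payoff_mono hxy hs v, dist_nonneg (x := x) (y := y)]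
  · linarith [hG.payoff_le_payoff_add hyx hs v, Real.dist_eq x y, le_abs_self (x - y)]

theorem ergodic_iff (x : ℝ) : (G x).Ergodic ↔ (G x).WhiteSecures x ∧ (G x).BlackSecures x := by
  rw [← isValue_const_iff]
  constructor
  · rintro ⟨μ, hμ, hconst⟩
    have ⟨_, _, hvalid, hpayoff, _⟩ := hμ
    convert hμ using 1
    ext v
    rw [hconst v w, hpayoff w, hG.payoff_w x (hG.apply_w_of_valid hvalid)]
  · exact fun h => ⟨_, h, fun _ _ => rfl⟩

theorem isLowerSet_whiteSecures : IsLowerSet {x | (G x).WhiteSecures x} := by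
  rintro z y hyz ⟨sW, ⟨sB, hvalid⟩, hsecure⟩
  refine ⟨sW, ⟨sB, by rwa [hG.combine_eq y z, hG.valid_iff y z]⟩, fun sB' hvalid' v => ?_⟩
  rw [hG.combine_eq y z] at hvalid' ⊢
  rw [hG.valid_iff y z] at hvalid'
  linarith [hsecure sB' hvalid' v, hG.payoff_le_payoff_add hyz (hG.apply_w_of_valid hvalid') v]

theorem isUpperSet_blackSecures : IsUpperSet {x | (G x).BlackSecures x} := by
  rintro x y hxy ⟨sB, ⟨sW, hvalid⟩, hsecure⟩
  refine ⟨sB, ⟨sW, by rwa [hG.combine_eq y x, hG.valid_iff y x]⟩, fun sW' hvalid' v => ?_⟩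
  rw [hG.combine_eq y x] at hvalid' ⊢
  rw [hG.valid_iff y x] at hvalid'
  linarith [hsecure sW' hvalid' v, hG.payoff_le_payoff_add hxy (hG.apply_w_of_valid hvalid') v]

theorem isClosed_whiteSecures : IsClosed {x | (G x).WhiteSecures x} := by
  have hset : {x | (G x).WhiteSecures x} =
      ⋃ sW ∈ {sW | ∃ sB, (G 0).Valid ((G 0).combine sW sB)},
        ⋂ sB ∈ {sB | (G 0).Valid ((G 0).combine sW sB)},
          ⋂ v, {x | x ≤ (G x).payoff ((G 0).combine sW sB) v} := by
    ext x
    simp only [Set.mem_ofPred_eq, Set.mem_iUnion, Set.mem_iInter, WhiteSecures, exists_prop,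
      hG.combine_eq x 0, hG.valid_iff x 0]
  rw [hset]
  refine (Set.toFinite _).isClosed_biUnion fun sW _ => isClosed_biInter fun sB hvalid => ?_
  exact isClosed_iInter fun v =>
    isClosed_le continuous_id (hG.continuous_payoff (hG.apply_w_of_valid hvalid) v)

theorem isClosed_blackSecures : IsClosed {x | (G x).BlackSecures x} := by
  have hset : {x | (G x).BlackSecures x} =
      ⋃ sB ∈ {sB | ∃ sW, (G 0).Valid ((G 0).combine sW sB)},
        ⋂ sW ∈ {sW | (G 0).Valid ((G 0).combine sW sB)},
          ⋂ v, {x | (G x).payoff ((G 0).combine sW sB) v ≤ x} := by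
    ext x
    simp only [Set.mem_ofPred_eq, Set.mem_iUnion, Set.mem_iInter, BlackSecures, exists_prop,
      hG.combine_eq x 0, hG.valid_iff x 0]
  rw [hset]
  refine (Set.toFinite _).isClosed_biUnion fun sB _ => isClosed_biInter fun sW hvalid => ?_
  exact isClosed_iInter fun v =>
    isClosed_le (hG.continuous_payoff (hG.apply_w_of_valid hvalid) v) continuous_id

end Parametrized

end BWR

theorem parametrized_BWR_ergodicity_interval_general
    {V : Type} [Fintype V] [DecidableEq V]
    (G : ℝ → BWR V) (w : V) (R : ℝ)
    (hsucc : ∀ x y, (G x).succ = (G y).succ)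
    (hplayer : ∀ x y, (G x).player = (G y).player)
    (hp : ∀ x y, (G x).p = (G y).p)
    -- w is deterministic and carries only a self-loop of reward x
    (hwdet : ∀ x, (G x).player w ≠ 2)
    (hw : ∀ x, (G x).succ w = {w})
    (hwr : ∀ x, (G x).r w w = x)
    (hr : ∀ x y v u, ¬(v = w ∧ u = w) → (G x).r v u = (G y).r v u) :
    ∃ a b : ℝ, {x ∈ Set.Icc (-R) R | (G x).Ergodic} = Set.Icc a b := by
  have hG : BWR.Parametrized G w := ⟨hsucc, hplayer, hp, hwdet, hw, hwr, hr⟩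
  have hset : {x ∈ Set.Icc (-R) R | (G x).Ergodic} =
      Set.Icc (-R) R ∩ ({x | (G x).WhiteSecures x} ∩ {x | (G x).BlackSecures x}) := by
    ext x
    simp only [Set.mem_inter_iff, Set.mem_ofPred_eq, hG.ergodic_iff]
  rw [hset]
  refine Set.OrdConnected.exists_eq_Icc_of_isClosed ?_ ?_ ?_ ?_
  · exact Set.ordConnected_Icc.inter
      (hG.isLowerSet_whiteSecures.ordConnected.inter hG.isUpperSet_blackSecures.ordConnected)
  · exact isClosed_Icc.inter (hG.isClosed_whiteSecures.inter hG.isClosed_blackSecures)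
  · exact bddBelow_Icc.mono Set.inter_subset_left
  · exact bddAbove_Icc.mono Set.inter_subset_left

/-- For a parametrized BWR-game `G(x)` (distinguished
deterministic position `w` with a self-loop of reward `x`, reachable with
positive probability from every random position; all other rewards bounded by
`R`), the set `{x ∈ [−R,R] : G(x) is ergodic}` is a (possibly empty) closed
subinterval of `[−R,R]`. -/
theorem parametrized_BWR_ergodicity_interval
    {V : Type} [Fintype V] [DecidableEq V]
    (G : ℝ → BWR V) (w : V) (R : ℝ)
    (hsucc : ∀ x y, (G x).succ = (G y).succ)
    (hplayer : ∀ x y, (G x).player = (G y).player)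
    (hp : ∀ x y, (G x).p = (G y).p)
    -- w is deterministic and carries only a self-loop of reward x
    (hwdet : ∀ x, (G x).player w ≠ 2)
    (hw : ∀ x, (G x).succ w = {w})
    (hwr : ∀ x, (G x).r w w = x)
    (hr : ∀ x y v u, ¬(v = w ∧ u = w) → (G x).r v u = (G y).r v u)
    -- w is reachable (in one step, with positive probability) from every random position
    (hreach : ∀ x v, (G x).player v = 2 → w ∈ (G x).succ v)
    -- all non-parameter rewards lie in [−R, R]
    (hbound : ∀ x v u, u ∈ (G x).succ v → ¬(v = w ∧ u = w) → |(G x).r v u| ≤ R) :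
    ∃ a b : ℝ, {x ∈ Set.Icc (-R) R | (G x).Ergodic} = Set.Icc a b :=
  parametrized_BWR_ergodicity_interval_general G w R hsucc hplayer hp hwdet hw hwr hr
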